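/- HiFT generalization bound: under the quantization assumption (|L(D; q̄(θ)) − L(D; θ)| ≤ ε for all θ and both train and test losses) and the uniform-convergence assumption for each subset parameter class, the final HiFT parameters θ^(k) satisfy L_test(θ^(k)) − L_test(θ*) ≤ 4kε + 2Σ_{i=1}^k sup_{θ̃^(i)} |L_test(q̄(θ̃^(i))) − L_train(q̄(θ̃^(i)))| + (L_test(θ^(k)*) − L_test(θ*)), where θ^(i) is the empirical minimizer over group i starting from θ^(i−1), θ^(i)* is the test-optimal parameter obtainable by changing only group i from θ^(i−1), and θ* is the globally test-optimal parameter — provided L_test(θ^(i)*) ≤ L_test(θ^(i−1)) for i < k. -/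
import Mathlib


/-- HiFT generalization bound. -/
theorem stmt_3 {Θ : Type*} (Ltrain Ltest : Θ → ℝ) (qbar : Θ → Θ) (ε : ℝ) (hε : 0 < ε)
    (k : ℕ) (hk : 1 ≤ k)
    (S : ℕ → Set Θ)            -- S i : parameters obtainable by changing only group i from θ^(i−1)
    (θ : ℕ → Θ)                -- θ 0 = θ_pre, θ i = empirical minimizer over group i
    (θstar : ℕ → Θ)            -- θstar i : test-optimal parameter changing only group i
    (θopt : Θ)                 -- globally test-optimal parameter
    (hmem : ∀ i, 1 ≤ i → i ≤ k → θ i ∈ S i)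
    (hERM : ∀ i, 1 ≤ i → i ≤ k → ∀ θ' ∈ S i, Ltrain (θ i) ≤ Ltrain θ')
    (hstarmem : ∀ i, 1 ≤ i → i ≤ k → θstar i ∈ S i)
    (hstar : ∀ i, 1 ≤ i → i ≤ k → ∀ θ' ∈ S i, Ltest (θstar i) ≤ Ltest θ')
    (hq1 : ∀ x : Θ, |Ltrain (qbar x) - Ltrain x| ≤ ε)
    (hq2 : ∀ x : Θ, |Ltest (qbar x) - Ltest x| ≤ ε)
    (hbdd : ∀ i, 1 ≤ i → i ≤ k →
      BddAbove ((fun x => |Ltest (qbar x) - Ltrain (qbar x)|) '' S i))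
    (hdecr : ∀ i, 1 ≤ i → i < k → Ltest (θstar i) ≤ Ltest (θ (i - 1))) :
    Ltest (θ k) - Ltest θopt ≤
      4 * k * ε
        + 2 * ∑ i ∈ Finset.Icc 1 k,
            sSup ((fun x => |Ltest (qbar x) - Ltrain (qbar x)|) '' S i)
        + (Ltest (θstar k) - Ltest θopt) := by
  set f : Θ → ℝ := fun x => |Ltest (qbar x) - Ltrain (qbar x)| with hf
  set s : ℝ := sSup (f '' S k) with hs
  have hkk : k ≤ k := le_rfl
  -- one-step bound at i = k
  have h1 := hq2 (θ k)
  have h2 : f (θ k) ≤ s := le_csSup (hbdd k hk hkk) ⟨θ k, hmem k hk hkk, rfl⟩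
  have h3 := hq1 (θ k)
  have h4 := hERM k hk hkk (θstar k) (hstarmem k hk hkk)
  have h5 := hq1 (θstar k)
  have h6 : f (θstar k) ≤ s := le_csSup (hbdd k hk hkk) ⟨θstar k, hstarmem k hk hkk, rfl⟩
  have h7 := hq2 (θstar k)
  rw [abs_le] at h1 h3 h5 h7
  have h2' : |Ltest (qbar (θ k)) - Ltrain (qbar (θ k))| ≤ s := h2
  have h6' : |Ltest (qbar (θstar k)) - Ltrain (qbar (θstar k))| ≤ s := h6
  rw [abs_le] at h2' h6'
  have hstep : Ltest (θ k) ≤ Ltest (θstar k) + 4 * ε + 2 * s := by linarith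
  -- nonnegativity of each sup
  have hnn : ∀ i ∈ Finset.Icc 1 k, 0 ≤ sSup (f '' S i) := by
    intro i hi
    rw [Finset.mem_Icc] at hi
    exact (abs_nonneg _).trans (le_csSup (hbdd i hi.1 hi.2) ⟨θ i, hmem i hi.1 hi.2, rfl⟩)
  have hsum : s ≤ ∑ i ∈ Finset.Icc 1 k, sSup (f '' S i) :=
    Finset.single_le_sum hnn (Finset.mem_Icc.mpr ⟨hk, hkk⟩)
  have hk1 : (1 : ℝ) ≤ (k : ℝ) := by exact_mod_cast hk
  have hke : 4 * ε ≤ 4 * (k : ℝ) * ε := by nlinarith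
  linarith
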